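/- Let w = (f,h) ∈ S = K ≀_Γ Sym(Γ) be a wreath cycle with h ≠ 1 and γ₀ ∈ terr(w). Then the map (h^t, x, d) ↦ ([h^t, γ₀^t, x, d^t]B, h^t) is a bijection from h^H × ([γ₀,w]Yade)^K × K^{terr(w)\{γ₀}} onto the conjugacy class w^W of w in W = K ≀_Γ H. In particular, if K and H are finite, |w^W| = |h^H| · |([γ₀,w]Yade)^K| · |K|^{|h|-1}. -/

import Mathlib

set_option linter.unusedSectionVars false

/-- The wreath product `K ≀_Γ Sym(Γ)` (with right-action conventions from the paper):
multiplication `(f,h)(e,g) = (f · e^{h⁻¹}, hg)` where `[γ](f·e^{h⁻¹}) = [γ]f * [γ^h]e`. -/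
structure Wr (K : Type*) (Γ : Type*) where
  base : Γ → K
  top : Equiv.Perm Γ

namespace Wr

variable {K Γ : Type*} [Group K]

theorem ext' {w v : Wr K Γ} (h1 : w.base = v.base) (h2 : w.top = v.top) : w = v := by
  cases w; cases v; cases h1; cases h2; rfl

instance : Group (Wr K Γ) where
  mul w v := ⟨fun γ => w.base γ * v.base (w.top γ), w.top.trans v.top⟩
  one := ⟨fun _ => 1, 1⟩
  inv w := ⟨fun γ => (w.base (w.top⁻¹ γ))⁻¹, w.top⁻¹⟩
  mul_assoc a b c := ext' (funext fun γ => mul_assoc _ _ _) (Equiv.trans_assoc _ _ _)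
  one_mul a := ext' (funext fun γ => one_mul _) (Equiv.refl_trans _)
  mul_one a := ext' (funext fun γ => mul_one _) (Equiv.trans_refl _)
  inv_mul_cancel a := ext' (funext fun γ => inv_mul_cancel _) (Equiv.symm_trans_self _)

/-- The support of a permutation, as a set. -/
def psupp (h : Equiv.Perm Γ) : Set Γ := {γ | h γ ≠ γ}

/-- The territory of a wreath product element. -/
def terr (w : Wr K Γ) : Set Γ := psupp w.top ∪ {γ | w.base γ ≠ 1}

/-- Wreath cycles: either trivial top and a singleton territory, or the top is a
single nontrivial cycle and the territory equals its support. -/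
def IsWreathCycle (w : Wr K Γ) : Prop :=
  (w.top = 1 ∧ ∃ γ₀, terr w = {γ₀}) ∨ (w.top.IsCycle ∧ terr w = psupp w.top)

/-- The yade of `w` at `γ`: the ordered product `∏_{i=0}^{|h|-1} [γ^{h^i}]f`. -/
noncomputable def yade (w : Wr K Γ) (γ : Γ) : K :=
  ((List.range (orderOf w.top)).map fun i => w.base ((w.top ^ i) γ)).prod

end Wr

open Wr

namespace Wr

variable {K Γ : Type*} [Group K] [DecidableEq Γ]

/-- The map `B`: given a cycle `h`, a point `γ₀` of its support, a prescribed yade `x`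
and `d ∈ K^{supp(h)\{γ₀}}`, produce the base component sending `γ₀` to
`x · ([γ₀^{h^{|h|-1}}]d)⁻¹ ⋯ ([γ₀^h]d)⁻¹`, each `γ ∈ supp(h)\{γ₀}` to `[γ]d`,
and everything else to `1`. -/
noncomputable def Bmap (h : Equiv.Perm Γ) (γ₀ : Γ) (x : K) (d : Γ → K) : Γ → K :=
  fun γ =>
    if γ = γ₀ then
      x * (((List.range (orderOf h - 1)).map fun i => d ((h ^ (i + 1)) γ₀)).prod)⁻¹
    else if h γ ≠ γ then d γ else 1

end Wr

/-!
The yade of `w = (f, h)` at `γ` is the base of `w ^ |h|` at `γ`. Hence conjugating `w` by `a`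
conjugates its yades in `K`, and since `w` is its own conjugate by `w`, the yades of `w` at the
points of one `h`-cycle are all conjugate. Conversely, two elements `(f, h)`, `(f', h)` with `h`
a cycle and trivial bases off its support are conjugate by some `(e, 1)` as soon as their yades
at `γ₀` are conjugate, say by `c`: along the cycle, `e` is forced by
`e(γ^h) = f(γ)⁻¹ e(γ) f'(γ)` starting from `e(γ₀) = c⁻¹`, and it closes up after `|h|` steps
exactly because of the yade condition.

Conjugation by `(1, t)` transports `B` at `(h, γ₀)` to `B` at `(h^t, γ₀^t)`. So every element of
`w^W` is `(1, t)⁻¹ (f', h) (1, t)` with `t` the chosen conjugator of its top, and `(f', h)` is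
determined by its yade at `γ₀` and its base off `γ₀`, which is exactly what `B` prescribes.
-/

lemma Equiv.Perm.apply_pow_apply_ne_self {Γ : Type*} {h : Equiv.Perm Γ} {γ : Γ}
    (hγ : h γ ≠ γ) (i : ℕ) : h ((h ^ i) γ) ≠ (h ^ i) γ := fun hfix =>
  hγ ((h ^ i).injective (by rw [← Equiv.Perm.mul_apply, ← pow_succ, pow_succ',
    Equiv.Perm.mul_apply, hfix]))

namespace Equiv.Perm.IsCycle

variable {Γ : Type*} [Fintype Γ] [DecidableEq Γ] {h : Equiv.Perm Γ} {γ₀ : Γ}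

lemma pow_apply_eq_pow_apply_iff (hc : h.IsCycle) (hγ₀ : h γ₀ ≠ γ₀) {i j : ℕ} :
    (h ^ i) γ₀ = (h ^ j) γ₀ ↔ i ≡ j [MOD orderOf h] := by
  have hon : h.IsCycleOn (h.support : Set Γ) := by
    rw [Equiv.Perm.coe_support_eq_set_support]; exact hc.isCycleOn
  rw [hc.orderOf, hon.pow_apply_eq_pow_apply (Equiv.Perm.mem_support.2 hγ₀)]

lemma pow_apply_ne_self (hc : h.IsCycle) (hγ₀ : h γ₀ ≠ γ₀) {j : ℕ} (hj0 : 0 < j)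
    (hjn : j < orderOf h) : (h ^ j) γ₀ ≠ γ₀ := by
  intro hj
  have hmod := (hc.pow_apply_eq_pow_apply_iff hγ₀ (j := 0)).1 (by simpa using hj)
  rw [Nat.ModEq, Nat.mod_eq_of_lt hjn, Nat.zero_mod] at hmod
  omega

end Equiv.Perm.IsCycle

lemma ncard_setOf_forall_notMem_eq_one {K Γ : Type*} [One K] [Fintype K] [Fintype Γ]
    (S : Set Γ) : {d : Γ → K | ∀ γ ∉ S, d γ = 1}.ncard = Fintype.card K ^ S.ncard := by
  classical
  have hpi : {d : Γ → K | ∀ γ ∉ S, d γ = 1} =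
      Set.univ.pi fun γ => if γ ∈ S then Set.univ else {1} := by
    ext d
    simp only [Set.mem_ofPred_eq, Set.mem_pi, Set.mem_univ, true_implies]
    refine forall_congr' fun γ => ?_
    split_ifs <;> simp [*]
  rw [hpi, ← Nat.card_coe_set_eq, Nat.card_congr (Equiv.Set.univPi _), Nat.card_pi,
    Set.ncard_eq_toFinset_card', ← Finset.prod_const, ← Fintype.prod_ite_mem S.toFinset]
  refine Finset.prod_congr rfl fun γ _ => ?_
  simp only [Set.mem_toFinset]
  split_ifs <;> simp [Nat.card_eq_fintype_card]

namespace Wr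

section Group

variable {K Γ : Type*} [Group K]

@[simp] lemma mul_top (u v : Wr K Γ) : (u * v).top = v.top * u.top := rfl

lemma mul_base_apply (u v : Wr K Γ) (γ : Γ) :
    (u * v).base γ = u.base γ * v.base (u.top γ) := rfl

@[simp] lemma inv_top (u : Wr K Γ) : u⁻¹.top = u.top⁻¹ := rfl

lemma conj_top (u a : Wr K Γ) : (a⁻¹ * u * a).top = a.top * u.top * a.top⁻¹ := by
  simp [mul_assoc]

lemma conj_base_apply (u a : Wr K Γ) (γ : Γ) :
    (a⁻¹ * u * a).base γ =
      (a.base (a.top⁻¹ γ))⁻¹ * u.base (a.top⁻¹ γ) * a.base (u.top (a.top⁻¹ γ)) := rfl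

@[simp] lemma pow_top (u : Wr K Γ) (k : ℕ) : (u ^ k).top = u.top ^ k := by
  induction k with
  | zero => rfl
  | succ k ih => rw [pow_succ, mul_top, ih, pow_succ']

lemma pow_base_apply (u : Wr K Γ) (k : ℕ) (γ : Γ) :
    (u ^ k).base γ = ((List.range k).map fun i => u.base ((u.top ^ i) γ)).prod := by
  induction k with
  | zero => rfl
  | succ k ih => simp [pow_succ, mul_base_apply, ih, List.range_succ]

lemma mk_one_conj (t h : Equiv.Perm Γ) (f : Γ → K) :
    (mk 1 t)⁻¹ * mk f h * mk 1 t = mk (fun γ => f (t⁻¹ γ)) (t * h * t⁻¹) :=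
  ext' (funext fun γ => by simp [conj_base_apply]) (conj_top _ _)

lemma mk_conj_of_top_eq_one (u : Wr K Γ) (e : Γ → K) :
    (mk e 1)⁻¹ * u * mk e 1 = mk (fun γ => (e γ)⁻¹ * u.base γ * e (u.top γ)) u.top :=
  ext' (funext fun γ => by simp [conj_base_apply]) (by simp)

lemma yade_eq_pow_base (w : Wr K Γ) (γ : Γ) : yade w γ = (w ^ orderOf w.top).base γ :=
  (pow_base_apply _ _ _).symm

lemma yade_conj (w a : Wr K Γ) (γ : Γ) :
    yade (a⁻¹ * w * a) γ =
      (a.base (a.top⁻¹ γ))⁻¹ * yade w (a.top⁻¹ γ) * a.base (a.top⁻¹ γ) := by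
  have hord : orderOf (a⁻¹ * w * a).top = orderOf w.top := by
    rw [conj_top, ← MulAut.conj_apply, MulEquiv.orderOf_eq]
  have hpow : (a⁻¹ * w * a) ^ orderOf w.top = a⁻¹ * w ^ orderOf w.top * a := by
    simpa using conj_pow (a := a⁻¹) (b := w)
  rw [yade_eq_pow_base, hord, hpow, conj_base_apply, yade_eq_pow_base, pow_top,
    pow_orderOf_eq_one, Equiv.Perm.one_apply]

lemma isConj_yade_conj (w a : Wr K Γ) (γ : Γ) :
    IsConj (yade w (a.top⁻¹ γ)) (yade (a⁻¹ * w * a) γ) := by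
  rw [yade_conj, isConj_comm]
  exact isConj_iff.2 ⟨a.base (a.top⁻¹ γ), by group⟩

-- `w` is its own conjugate by `w`, which moves the base point one step along `w.top`.
lemma isConj_yade_pow_apply (w : Wr K Γ) (γ : Γ) (m : ℕ) :
    IsConj (yade w γ) (yade w ((w.top ^ m) γ)) := by
  induction m with
  | zero => rfl
  | succ m ih =>
    have h := isConj_yade_conj w w (w.top ((w.top ^ m) γ))
    simp only [inv_mul_cancel, one_mul, Equiv.Perm.coe_inv, Equiv.symm_apply_apply] at h
    rw [pow_succ', Equiv.Perm.mul_apply]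
    exact ih.trans h

lemma base_eq_one_of_terr_eq {w : Wr K Γ} (hterr : terr w = psupp w.top) {δ : Γ}
    (hδ : w.top δ = δ) : w.base δ = 1 := by
  by_contra hb
  have hmem : δ ∈ terr w := Or.inr hb
  rw [hterr] at hmem
  exact hmem hδ

lemma conj_base_eq_one_of_fixed {w : Wr K Γ} (hw : ∀ δ, w.top δ = δ → w.base δ = 1)
    (a : Wr K Γ) {δ : Γ} (hδ : (a⁻¹ * w * a).top δ = δ) : (a⁻¹ * w * a).base δ = 1 := by
  have hfix : w.top (a.top⁻¹ δ) = a.top⁻¹ δ := by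
    rw [conj_top, Equiv.Perm.mul_apply, Equiv.Perm.mul_apply] at hδ
    exact Equiv.Perm.eq_inv_iff_eq.2 hδ
  rw [conj_base_apply, hfix, hw _ hfix, mul_one, inv_mul_cancel]

end Group

section Bmap

variable {K Γ : Type*} [Group K]

/-- `yade` without its first factor; `Bmap` divides `x` by it at `γ₀`. -/
noncomputable def yadeTail (h : Equiv.Perm Γ) (γ : Γ) (d : Γ → K) : K :=
  ((List.range (orderOf h - 1)).map fun i => d ((h ^ (i + 1)) γ)).prod

variable [DecidableEq Γ] {h : Equiv.Perm Γ} {γ₀ γ : Γ} {x : K} {d : Γ → K}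

lemma Bmap_apply_self : Bmap h γ₀ x d γ₀ = x * (yadeTail h γ₀ d)⁻¹ := if_pos rfl

lemma Bmap_apply_of_ne (hne : γ ≠ γ₀) (hγ : h γ ≠ γ) : Bmap h γ₀ x d γ = d γ := by
  simp [Bmap, hne, hγ]

lemma Bmap_apply_of_fixed (hne : γ ≠ γ₀) (hγ : h γ = γ) : Bmap h γ₀ x d γ = 1 := by
  simp [Bmap, hne, hγ]

lemma Bmap_conj (t : Equiv.Perm Γ) :
    Bmap (t * h * t⁻¹) (t γ₀) x (fun γ => d (t⁻¹ γ)) = fun γ => Bmap h γ₀ x d (t⁻¹ γ) := by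
  have hord : orderOf (t * h * t⁻¹) = orderOf h := by
    rw [← MulAut.conj_apply, MulEquiv.orderOf_eq]
  have hpow : ∀ k : ℕ, t⁻¹ (((t * h * t⁻¹) ^ k) (t γ₀)) = (h ^ k) γ₀ := by simp [conj_pow]
  have hmove : ∀ γ, (t * h * t⁻¹) γ = γ ↔ h (t⁻¹ γ) = t⁻¹ γ := fun γ => by
    rw [Equiv.Perm.mul_apply, Equiv.Perm.mul_apply, ← Equiv.Perm.eq_inv_iff_eq]
  funext γ
  simp only [Bmap, hord, hpow, ne_eq, hmove, ← Equiv.Perm.inv_eq_iff_eq]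

lemma mk_Bmap_eq_mk_one_conj {g t : Equiv.Perm Γ} (ht : t * h * t⁻¹ = g) :
    mk (Bmap g (t γ₀) x fun γ => d (t⁻¹ γ)) g =
      (mk 1 t)⁻¹ * mk (Bmap h γ₀ x d) h * mk 1 t := by
  subst ht
  rw [mk_one_conj, Bmap_conj]

lemma Bmap_injective {x' : K} {d' : Γ → K} (hd : ∀ γ, ¬(γ ∈ psupp h ∧ γ ≠ γ₀) → d γ = 1)
    (hd' : ∀ γ, ¬(γ ∈ psupp h ∧ γ ≠ γ₀) → d' γ = 1) (heq : Bmap h γ₀ x d = Bmap h γ₀ x' d') :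
    x = x' ∧ d = d' := by
  obtain rfl : d = d' := funext fun γ => by
    by_cases hγ : γ ∈ psupp h ∧ γ ≠ γ₀
    · simpa [Bmap_apply_of_ne hγ.2 hγ.1] using congrFun heq γ
    · rw [hd γ hγ, hd' γ hγ]
  have hx := congrFun heq γ₀
  rw [Bmap_apply_self, Bmap_apply_self] at hx
  exact ⟨mul_right_cancel hx, rfl⟩

end Bmap

section Cycle

variable {K Γ : Type*} [Group K] [Fintype Γ]

lemma yade_eq_mul_yadeTail (w : Wr K Γ) (γ : Γ) :
    yade w γ = w.base γ * yadeTail w.top γ w.base := by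
  obtain ⟨n, hn⟩ := Nat.exists_eq_succ_of_ne_zero (orderOf_pos w.top).ne'
  simp [yade, yadeTail, hn, List.range_succ_eq_map, Function.comp_def]

lemma isConj_yade_conj_of_isCycle {w : Wr K Γ} (hc : w.top.IsCycle) (a : Wr K Γ) {x y : Γ}
    (hx : w.top x ≠ x) (hy : (a⁻¹ * w * a).top y ≠ y) :
    IsConj (yade w x) (yade (a⁻¹ * w * a) y) := by
  have hax : a.top⁻¹ (a.top x) = x := Equiv.Perm.inv_eq_iff_eq.2 rfl
  have hconj := isConj_yade_conj w a (a.top x)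
  rw [hax] at hconj
  have hmove : (a⁻¹ * w * a).top (a.top x) ≠ a.top x := by
    rw [conj_top, Equiv.Perm.mul_apply, Equiv.Perm.mul_apply, hax]
    exact fun h => hx (a.top.injective h)
  have hc' : (a⁻¹ * w * a).top.IsCycle := by rw [conj_top]; exact hc.conj
  obtain ⟨m, rfl⟩ := hc'.exists_pow_eq hmove hy
  exact hconj.trans (isConj_yade_pow_apply _ _ m)

variable [DecidableEq Γ] {h : Equiv.Perm Γ} {γ₀ : Γ}

lemma yadeTail_congr (hc : h.IsCycle) (hγ₀ : h γ₀ ≠ γ₀) {d d' : Γ → K}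
    (hd : ∀ γ, h γ ≠ γ → γ ≠ γ₀ → d γ = d' γ) : yadeTail h γ₀ d = yadeTail h γ₀ d' :=
  congrArg List.prod <| List.map_congr_left fun i hi =>
    hd _ (Equiv.Perm.apply_pow_apply_ne_self hγ₀ _)
      (hc.pow_apply_ne_self hγ₀ i.succ_pos (by have := List.mem_range.1 hi; omega))

lemma yade_mk_Bmap (hc : h.IsCycle) (hγ₀ : h γ₀ ≠ γ₀) (x : K) (d : Γ → K) :
    yade (mk (Bmap h γ₀ x d) h) γ₀ = x := by
  rw [yade_eq_mul_yadeTail]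
  dsimp only
  rw [Bmap_apply_self, yadeTail_congr hc hγ₀ (d' := d) fun γ hγ hne => Bmap_apply_of_ne hne hγ]
  group

lemma Bmap_yade_update {f : Γ → K} (hc : h.IsCycle) (hγ₀ : h γ₀ ≠ γ₀)
    (hf : ∀ γ, h γ = γ → f γ = 1) :
    Bmap h γ₀ (yade (mk f h) γ₀) (Function.update f γ₀ 1) = f := by
  funext γ
  by_cases hne : γ = γ₀
  · subst hne
    rw [Bmap_apply_self, yade_eq_mul_yadeTail]
    dsimp only
    rw [yadeTail_congr hc hγ₀ (d := Function.update f γ 1) (d' := f)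
      fun δ _ hδ => Function.update_of_ne hδ _ _]
    group
  by_cases hγ : h γ = γ
  · rw [Bmap_apply_of_fixed hne hγ, hf γ hγ]
  · rw [Bmap_apply_of_ne hne hγ, Function.update_of_ne hne]

lemma exists_mk_one_conj_eq_of_isConj_yade {u v : Wr K Γ}
    (hu : u.top = h) (hv : v.top = h) (hc : h.IsCycle) (hγ₀ : h γ₀ ≠ γ₀)
    (hfix : ∀ δ, h δ = δ → u.base δ = v.base δ) (hy : IsConj (yade u γ₀) (yade v γ₀)) :
    ∃ e : Γ → K, (mk e 1)⁻¹ * u * mk e 1 = v := by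
  obtain ⟨c, hcy⟩ := isConj_iff.1 hy
  -- the value of the conjugator at `h ^ i γ₀`
  set E : ℕ → K := fun i => ((u ^ i).base γ₀)⁻¹ * c⁻¹ * (v ^ i).base γ₀ with hE
  have hEsucc : ∀ i, E (i + 1) = (u.base ((h ^ i) γ₀))⁻¹ * E i * v.base ((h ^ i) γ₀) := by
    intro i
    simp only [hE, pow_succ, mul_base_apply, pow_top, hu, hv]
    group
  have hEper : Function.Periodic E (orderOf h) := by
    have hyu : (u ^ orderOf h).base γ₀ = yade u γ₀ := by rw [yade_eq_pow_base, hu]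
    have hyv : (v ^ orderOf h).base γ₀ = yade v γ₀ := by rw [yade_eq_pow_base, hv]
    intro i
    simp only [hE, add_comm i, pow_add, mul_base_apply, pow_top, hu, hv, pow_orderOf_eq_one,
      Equiv.Perm.one_apply, hyu, hyv, ← hcy]
    group
  have hfac : Function.FactorsThrough E (fun i => (h ^ i) γ₀) := fun i j hij => by
    rw [← hEper.map_mod_nat i, ← hEper.map_mod_nat j,
      show i % orderOf h = j % orderOf h from (hc.pow_apply_eq_pow_apply_iff hγ₀).1 hij]
  set e := Function.extend (fun i => (h ^ i) γ₀) E 1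
  have he : ∀ i, e ((h ^ i) γ₀) = E i := hfac.extend_apply 1
  have he1 : ∀ δ, h δ = δ → e δ = 1 := fun δ hδ =>
    Function.extend_apply' _ _ _ fun ⟨i, hi⟩ =>
      Equiv.Perm.apply_pow_apply_ne_self hγ₀ i (hi ▸ hδ)
  refine ⟨e, ext' (funext fun δ => ?_) (by rw [mk_conj_of_top_eq_one, hu, hv])⟩
  rw [mk_conj_of_top_eq_one]
  dsimp only
  rw [hu]
  by_cases hδ : h δ = δ
  · rw [hδ, he1 δ hδ, hfix δ hδ, inv_one, one_mul, mul_one]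
  · obtain ⟨i, rfl⟩ := hc.exists_pow_eq hγ₀ hδ
    rw [← Equiv.Perm.mul_apply, ← pow_succ', he, he, hEsucc]
    group

end Cycle

section ConjClass

variable {K Γ : Type*} [Group K]

/-- The conjugacy class `w^W` of `w` in `W = K ≀_Γ H`. -/
def conjClassIn (H : Subgroup (Equiv.Perm Γ)) (w : Wr K Γ) : Set (Wr K Γ) :=
  {v | ∃ a : Wr K Γ, a.top ∈ H ∧ a⁻¹ * w * a = v}

/-- The parameter set `h^H × ([γ₀,w]Yade)^K × K^{terr(w)\{γ₀}}`. -/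
def cycleParams (H : Subgroup (Equiv.Perm Γ)) (w : Wr K Γ) (γ₀ : Γ) :
    Set (Equiv.Perm Γ × K × (Γ → K)) :=
  {p | (∃ t ∈ H, t * w.top * t⁻¹ = p.1) ∧ IsConj (yade w γ₀) p.2.1 ∧
    ∀ γ, ¬(γ ∈ terr w ∧ γ ≠ γ₀) → p.2.2 γ = 1}

def IsConjugatorChoice (H : Subgroup (Equiv.Perm Γ)) (h : Equiv.Perm Γ)
    (T : Equiv.Perm Γ → Equiv.Perm Γ) : Prop :=
  ∀ g, (∃ t ∈ H, t * h * t⁻¹ = g) → T g ∈ H ∧ T g * h * (T g)⁻¹ = g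

variable [DecidableEq Γ]

/-- The map `(h^t, x, d) ↦ ([h^t, γ₀^t, x, d^t]B, h^t)`, with `t = T (h^t)`. -/
noncomputable def ofCycleParams (T : Equiv.Perm Γ → Equiv.Perm Γ) (γ₀ : Γ)
    (p : Equiv.Perm Γ × K × (Γ → K)) : Wr K Γ :=
  mk (Bmap p.1 (T p.1 γ₀) p.2.1 fun γ => p.2.2 ((T p.1)⁻¹ γ)) p.1

variable {H : Subgroup (Equiv.Perm Γ)} {w : Wr K Γ} {γ₀ : Γ} {T : Equiv.Perm Γ → Equiv.Perm Γ}

lemma ofCycleParams_eq_conj {p : Equiv.Perm Γ × K × (Γ → K)}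
    (hp : T p.1 * w.top * (T p.1)⁻¹ = p.1) :
    ofCycleParams T γ₀ p =
      (mk 1 (T p.1))⁻¹ * mk (Bmap w.top γ₀ p.2.1 p.2.2) w.top * mk 1 (T p.1) :=
  mk_Bmap_eq_mk_one_conj hp

lemma injOn_ofCycleParams (hT : IsConjugatorChoice H w.top T) (hterr : terr w = psupp w.top) :
    Set.InjOn (ofCycleParams T γ₀) (cycleParams H w γ₀) := by
  rintro ⟨g, x₁, d₁⟩ ⟨hg, -, hd₁⟩ ⟨g₂, x₂, d₂⟩ ⟨-, -, hd₂⟩ heq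
  obtain rfl : g = g₂ := congrArg top heq
  rw [ofCycleParams_eq_conj (hT g hg).2, ofCycleParams_eq_conj (hT g hg).2, mul_left_inj,
    mul_right_inj] at heq
  rw [hterr] at hd₁ hd₂
  obtain ⟨rfl, rfl⟩ := Bmap_injective hd₁ hd₂ (congrArg base heq)
  rfl

variable [Fintype Γ]

lemma mapsTo_ofCycleParams (hT : IsConjugatorChoice H w.top T) (hc : w.top.IsCycle)
    (hterr : terr w = psupp w.top) (hγ₀ : w.top γ₀ ≠ γ₀) :
    Set.MapsTo (ofCycleParams T γ₀) (cycleParams H w γ₀) (conjClassIn H w) := by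
  rintro ⟨g, x, d⟩ ⟨hg, hx, -⟩
  obtain ⟨htH, htc⟩ := hT g hg
  obtain ⟨e, he⟩ := exists_mk_one_conj_eq_of_isConj_yade (u := w)
    (v := mk (Bmap w.top γ₀ x d) w.top) rfl rfl hc hγ₀
    (fun δ hδ => (base_eq_one_of_terr_eq hterr hδ).trans
      (Bmap_apply_of_fixed (by rintro rfl; exact hγ₀ hδ) hδ).symm)
    (by rwa [yade_mk_Bmap hc hγ₀])
  refine ⟨mk e 1 * mk 1 (T g), by simpa using htH, ?_⟩
  rw [ofCycleParams_eq_conj htc, ← he]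
  group

lemma surjOn_ofCycleParams (hT : IsConjugatorChoice H w.top T) (hc : w.top.IsCycle)
    (hterr : terr w = psupp w.top) (hγ₀ : w.top γ₀ ≠ γ₀) :
    Set.SurjOn (ofCycleParams T γ₀) (cycleParams H w γ₀) (conjClassIn H w) := by
  rintro _ ⟨a, haH, rfl⟩
  set g := (a⁻¹ * w * a).top
  have hg : ∃ t ∈ H, t * w.top * t⁻¹ = g := ⟨a.top, haH, (conj_top w a).symm⟩
  have htc := (hT g hg).2
  set u : Wr K Γ := mk (fun γ => (a⁻¹ * w * a).base (T g γ)) w.top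
  have hu : (mk 1 (T g))⁻¹ * u * mk 1 (T g) = a⁻¹ * w * a := by
    rw [mk_one_conj, htc]
    exact ext' (funext fun γ => by simp) rfl
  have huw : (a * (mk 1 (T g))⁻¹)⁻¹ * w * (a * (mk 1 (T g))⁻¹) = u := by
    calc _ = mk 1 (T g) * (a⁻¹ * w * a) * (mk 1 (T g))⁻¹ := by group
      _ = u := by rw [← hu]; group
  have hu1 : ∀ δ, w.top δ = δ → u.base δ = 1 := fun δ hδ => by
    rw [← huw]
    exact conj_base_eq_one_of_fixed (fun _ => base_eq_one_of_terr_eq hterr) _ (by rwa [huw])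
  refine ⟨(g, yade u γ₀, Function.update u.base γ₀ 1), ⟨hg, ?_, fun γ hγ => ?_⟩, ?_⟩
  · rw [← huw]
    exact isConj_yade_conj_of_isCycle hc _ hγ₀ (by rwa [huw])
  · dsimp only
    by_cases hne : γ = γ₀
    · rw [hne, Function.update_self]
    · rw [Function.update_of_ne hne, hu1 γ]
      by_contra hmove
      exact hγ ⟨Or.inl hmove, hne⟩
  · rw [ofCycleParams_eq_conj htc]
    dsimp only
    rw [Bmap_yade_update hc hγ₀ hu1]
    exact hu

lemma bijOn_ofCycleParams (hT : IsConjugatorChoice H w.top T) (hc : w.top.IsCycle)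
    (hterr : terr w = psupp w.top) (hγ₀ : w.top γ₀ ≠ γ₀) :
    Set.BijOn (ofCycleParams T γ₀) (cycleParams H w γ₀) (conjClassIn H w) :=
  ⟨mapsTo_ofCycleParams hT hc hterr hγ₀, injOn_ofCycleParams hT hterr,
    surjOn_ofCycleParams hT hc hterr hγ₀⟩

lemma ncard_cycleParams [Fintype K] (hc : w.top.IsCycle) (hterr : terr w = psupp w.top)
    (hγ₀ : γ₀ ∈ terr w) :
    (cycleParams H w γ₀).ncard =
      {g : Equiv.Perm Γ | ∃ t ∈ H, t * w.top * t⁻¹ = g}.ncard *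
        {x : K | IsConj (yade w γ₀) x}.ncard * Fintype.card K ^ (orderOf w.top - 1) := by
  have hprod : cycleParams H w γ₀ = {g : Equiv.Perm Γ | ∃ t ∈ H, t * w.top * t⁻¹ = g} ×ˢ
      {x : K | IsConj (yade w γ₀) x} ×ˢ {d : Γ → K | ∀ γ ∉ terr w \ {γ₀}, d γ = 1} := by
    ext ⟨g, x, d⟩
    simp [cycleParams]
  have hcard : (terr w \ {γ₀}).ncard = orderOf w.top - 1 := by
    rw [Set.ncard_sdiff_singleton_of_mem hγ₀, hterr, psupp,
      ← Equiv.Perm.coe_support_eq_set_support, Set.ncard_coe_finset, hc.orderOf]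
  rw [hprod, Set.ncard_prod, Set.ncard_prod, ncard_setOf_forall_notMem_eq_one, hcard, mul_assoc]

end ConjClass

end Wr

theorem bijOn_conjClass_wreathCycle_general {K Γ : Type*} [Group K] [Fintype K] [Fintype Γ]
    [DecidableEq Γ] (H : Subgroup (Equiv.Perm Γ)) (w : Wr K Γ)
    (hw : IsWreathCycle w) (hh : w.top ≠ 1)
    (γ₀ : Γ) (hγ₀ : γ₀ ∈ terr w)
    (T : Equiv.Perm Γ → Equiv.Perm Γ)
    (hT : ∀ g, (∃ t ∈ H, t * w.top * t⁻¹ = g) →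
      T g ∈ H ∧ T g * w.top * (T g)⁻¹ = g) :
    Set.BijOn
      (fun p : Equiv.Perm Γ × K × (Γ → K) =>
        Wr.mk (Bmap p.1 (T p.1 γ₀) p.2.1 (fun γ => p.2.2 ((T p.1)⁻¹ γ))) p.1)
      {p : Equiv.Perm Γ × K × (Γ → K) |
        (∃ t ∈ H, t * w.top * t⁻¹ = p.1) ∧ IsConj (yade w γ₀) p.2.1 ∧
          ∀ γ, ¬(γ ∈ terr w ∧ γ ≠ γ₀) → p.2.2 γ = 1}
      {v : Wr K Γ | ∃ a : Wr K Γ, a.top ∈ H ∧ a⁻¹ * w * a = v} ∧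
    {v : Wr K Γ | ∃ a : Wr K Γ, a.top ∈ H ∧ a⁻¹ * w * a = v}.ncard =
      {g : Equiv.Perm Γ | ∃ t ∈ H, t * w.top * t⁻¹ = g}.ncard *
        {x : K | IsConj (yade w γ₀) x}.ncard *
        Fintype.card K ^ (orderOf w.top - 1) := by
  obtain ⟨hc, hterr⟩ : w.top.IsCycle ∧ terr w = psupp w.top := hw.resolve_left fun h => hh h.1
  have hbij : Set.BijOn (ofCycleParams T γ₀) (cycleParams H w γ₀) (conjClassIn H w) :=
    bijOn_ofCycleParams hT hc hterr (by rwa [hterr] at hγ₀)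
  refine ⟨hbij, ?_⟩
  change (conjClassIn H w).ncard = _
  rw [← hbij.image_eq, hbij.injOn.ncard_image]
  exact ncard_cycleParams hc hterr hγ₀

/-- for a wreath cycle `w = (f,h)` with `h ≠ 1` and `γ₀ ∈ terr w`,
the map `(h^t, x, d) ↦ ([h^t, γ₀^t, x, d^t]B, h^t)` (for any choice `T` of
conjugating elements) is a bijection from
`h^H × ([γ₀,w]Yade)^K × K^{terr(w)\{γ₀}}` onto the `W`-conjugacy class of `w`;
in particular `|w^W| = |h^H| · |([γ₀,w]Yade)^K| · |K|^{|h|-1}`. -/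
theorem bijOn_conjClass_wreathCycle {K Γ : Type*} [Group K] [Fintype K] [Fintype Γ]
    [DecidableEq Γ] (H : Subgroup (Equiv.Perm Γ)) (w : Wr K Γ)
    (hw : IsWreathCycle w) (hwH : w.top ∈ H) (hh : w.top ≠ 1)
    (γ₀ : Γ) (hγ₀ : γ₀ ∈ terr w)
    (T : Equiv.Perm Γ → Equiv.Perm Γ)
    (hT : ∀ g, (∃ t ∈ H, t * w.top * t⁻¹ = g) →
      T g ∈ H ∧ T g * w.top * (T g)⁻¹ = g) :
    Set.BijOn
      (fun p : Equiv.Perm Γ × K × (Γ → K) =>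
        Wr.mk (Bmap p.1 (T p.1 γ₀) p.2.1 (fun γ => p.2.2 ((T p.1)⁻¹ γ))) p.1)
      {p : Equiv.Perm Γ × K × (Γ → K) |
        (∃ t ∈ H, t * w.top * t⁻¹ = p.1) ∧ IsConj (yade w γ₀) p.2.1 ∧
          ∀ γ, ¬(γ ∈ terr w ∧ γ ≠ γ₀) → p.2.2 γ = 1}
      {v : Wr K Γ | ∃ a : Wr K Γ, a.top ∈ H ∧ a⁻¹ * w * a = v} ∧
    {v : Wr K Γ | ∃ a : Wr K Γ, a.top ∈ H ∧ a⁻¹ * w * a = v}.ncard =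
      {g : Equiv.Perm Γ | ∃ t ∈ H, t * w.top * t⁻¹ = g}.ncard *
        {x : K | IsConj (yade w γ₀) x}.ncard *
        Fintype.card K ^ (orderOf w.top - 1) :=
  bijOn_conjClass_wreathCycle_general H w hw hh γ₀ hγ₀ T hT
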